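/- Assume QC = ρωC with ρ > 0, |ω| = 1 (so C is an eigenvector of Q), and hypothesis (jsr_λ) with λ < ρ. Then sup_{x∈[0,1]} ‖(ρω)^{−K} S_K(x) − F(x)‖ = O((λ/ρ)^K) as K → ∞, where F is the unique continuous solution of the basic dilation equation with V = C. -/

import Mathlib

open scoped Classical BigOperators
open Filter Asymptotics

attribute [local instance] Matrix.linftyOpNormedAddCommGroup Matrix.linftyOpNormedRing

noncomputable section

/-- `A_w = A_{w_1} ⋯ A_{w_K}` for a word `w` of length `K` over the digit alphabet. -/
def wordProd {B d : ℕ} (A : Fin B → Matrix (Fin d) (Fin d) ℂ) {K : ℕ}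
    (w : Fin K → Fin B) : Matrix (Fin d) (Fin d) ℂ :=
  ((List.ofFn w).map A).prod

/-- `(0.w)_B = Σ_{k=1}^K w_k B^{-k}`. -/
def wordVal {B K : ℕ} (w : Fin K → Fin B) : ℝ :=
  ∑ k : Fin K, (w k : ℝ) / (B : ℝ) ^ ((k : ℕ) + 1)

/-- The running sum `S_K(x) = Σ_{|w|=K, (0.w)_B ≤ x} A_w C`. -/
def runSum {B d : ℕ} (A : Fin B → Matrix (Fin d) (Fin d) ℂ) (C : Fin d → ℂ)
    (K : ℕ) (x : ℝ) : Fin d → ℂ :=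
  ∑ w : Fin K → Fin B, if wordVal w ≤ x then (wordProd A w).mulVec C else 0

/-- The basic dilation equation for data `ρ, ω, V`. -/
def DilationEq {B d : ℕ} (A : Fin B → Matrix (Fin d) (Fin d) ℂ) (ρ : ℝ) (ω : ℂ)
    (V : Fin d → ℂ) (Φ : ℝ → Fin d → ℂ) : Prop :=
  Φ 0 = 0 ∧ Φ 1 = V ∧
    ∀ r : Fin B, ∀ x : ℝ, (r : ℝ) / B ≤ x → x < ((r : ℝ) + 1) / B →
      Φ x = ((ρ : ℂ) * ω)⁻¹ •
        ((∑ s ∈ Finset.univ.filter fun s : Fin B => s < r, (A s).mulVec V) +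
          (A r).mulVec (Φ (B * x - r)))

/-!
Write `μ = ρω` and `G_K = μ^{-K} S_K`. Splitting words by their first digit and using `QC = μC`
gives `G_{K+1}(x) = μ⁻¹ (Σ_{s<r} A_s C + A_r G_K(Bx - r))` on `[r/B, (r+1)/B)`, while `G_K = 0` left
of `0` and `G_K = C` from `1` on. The differences `G_{K+1} - G_K` therefore satisfy the homogeneous
relation; unrolled along the digits of `x` they become `μ^{-K} A_w (G_1 - G_0)(y)`, which is
`O((λ/ρ)^K)` uniformly in `x`, so `G_K` converges geometrically to some `F`. The jumps of `G_K` are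
single terms `μ^{-K} A_w C`, also `O((λ/ρ)^K)`, hence `F` is continuous, and the relation passes to
the limit. Two continuous solutions differ by a solution of the homogeneous relation vanishing at
`1`, whose maximum on `[0, 1]` is multiplied by at most `(λ/ρ)^T < 1` when unrolled `T` times.
-/

open Matrix Set Topology

section Limits

lemma exists_norm_sub_le_geometric {α E : Type*} [NormedAddCommGroup E] [CompleteSpace E]
    {G : ℕ → α → E} {c q : ℝ} (hc : 0 ≤ c) (hq : q < 1)
    (hG : ∀ n x, ‖G (n + 1) x - G n x‖ ≤ c * q ^ n) :
    ∃ F : α → E, (∀ x, Tendsto (fun n => G n x) atTop (𝓝 (F x))) ∧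
      ∃ c' ≥ 0, ∀ n x, ‖G n x - F x‖ ≤ c' * q ^ n := by
  have hdist : ∀ x n, dist (G n x) (G (n + 1) x) ≤ c * q ^ n := fun x n => by
    rw [dist_eq_norm, norm_sub_rev]; exact hG n x
  choose F hF using fun x =>
    cauchySeq_tendsto_of_complete (cauchySeq_of_le_geometric q c hq (hdist x))
  refine ⟨F, hF, c / (1 - q), div_nonneg hc (sub_nonneg.mpr hq.le), fun n x => ?_⟩
  rw [← dist_eq_norm]
  exact (dist_le_of_le_geometric_of_tendsto q c hq (hdist x) (hF x) n).trans_eq (by ring)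

lemma uniformContinuous_of_forall_approx {α β : Type*} [PseudoMetricSpace α] [PseudoMetricSpace β]
    {F : α → β} (h : ∀ ε > 0, ∃ G : α → β, (∀ x, dist (G x) (F x) < ε) ∧
      ∃ δ > 0, ∀ u v, dist u v < δ → dist (G u) (G v) < ε) : UniformContinuous F := by
  rw [Metric.uniformContinuous_iff]
  intro ε hε
  obtain ⟨G, hGF, δ, hδ, hG⟩ := h (ε / 3) (by positivity)
  refine ⟨δ, hδ, fun u v huv => ?_⟩
  calc dist (F u) (F v) ≤ dist (F u) (G u) + dist (G u) (G v) + dist (G v) (F v) :=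
        dist_triangle4 _ _ _ _
    _ < ε / 3 + ε / 3 + ε / 3 := by
        gcongr
        · rw [dist_comm]; exact hGF u
        · exact hG u v huv
        · exact hGF v
    _ = ε := by ring

lemma isBigO_iSup_norm_of_le {α ι E : Type*} [NormedAddCommGroup E] {l : Filter α}
    {f : α → ι → E} {g : α → ℝ} {c : ℝ} (hc : 0 ≤ c) (hg : ∀ a, 0 ≤ g a)
    (hf : ∀ a i, ‖f a i‖ ≤ c * g a) : (fun a => ⨆ i, ‖f a i‖) =O[l] g :=
  IsBigO.of_bound c <| Eventually.of_forall fun a => by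
    rw [Real.norm_of_nonneg (Real.iSup_nonneg fun _ => norm_nonneg _), Real.norm_of_nonneg (hg a)]
    exact Real.iSup_le (hf a) (mul_nonneg hc (hg a))

end Limits

section Words

variable {B d : ℕ} (A : Fin B → Matrix (Fin d) (Fin d) ℂ)

lemma wordProd_zero (w : Fin 0 → Fin B) : wordProd A w = 1 := by
  simp [wordProd]

lemma wordProd_cons {K : ℕ} (s : Fin B) (w : Fin K → Fin B) :
    wordProd A (Fin.cons s w) = A s * wordProd A w := by
  simp [wordProd, List.ofFn_succ]

lemma wordProd_append {m n : ℕ} (u : Fin m → Fin B) (v : Fin n → Fin B) :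
    wordProd A (Fin.append u v) = wordProd A u * wordProd A v := by
  simp [wordProd, List.ofFn_add, Fin.append_right]

lemma sum_wordProd (K : ℕ) : ∑ w : Fin K → Fin B, wordProd A w = (∑ r, A r) ^ K := by
  induction K with
  | zero => simp [wordProd_zero]
  | succ K ih =>
    rw [← (Fin.consEquiv fun _ => Fin B).sum_comp, Fintype.sum_prod_type, pow_succ', Finset.sum_mul]
    refine Finset.sum_congr rfl fun s _ => ?_
    rw [← ih, Finset.mul_sum]
    exact Finset.sum_congr rfl fun w _ => wordProd_cons A s w

lemma wordVal_cons {K : ℕ} (s : Fin B) (w : Fin K → Fin B) :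
    wordVal (Fin.cons s w) = (s : ℝ) / B + wordVal w / B := by
  simp only [wordVal, Fin.sum_univ_succ, Fin.cons_zero, Fin.cons_succ, Finset.sum_div,
    Fin.val_succ, div_div, pow_succ, Fin.val_zero, pow_zero, one_mul]

lemma wordVal_nonneg {K : ℕ} (w : Fin K → Fin B) : 0 ≤ wordVal w :=
  Finset.sum_nonneg fun _ _ => by positivity

/-- `finFunctionFinEquiv` reads the least significant digit first, hence the reversal. -/
lemma wordVal_eq_finFunctionFinEquiv (hB : 0 < B) {K : ℕ} (w : Fin K → Fin B) :
    wordVal w = (finFunctionFinEquiv (w ∘ Fin.rev) : ℕ) / (B : ℝ) ^ K := by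
  rw [finFunctionFinEquiv_apply, ← Equiv.sum_comp Fin.revPerm, wordVal, Nat.cast_sum,
    Finset.sum_div]
  refine Finset.sum_congr rfl fun k _ => ?_
  have hK : (B : ℝ) ^ K = B ^ ((k : ℕ) + 1) * B ^ (k.rev : ℕ) := by
    rw [← pow_add, Fin.val_rev]; congr 1; omega
  rw [Fin.revPerm_apply, Function.comp_apply, Fin.rev_rev, hK]
  push_cast
  rw [mul_div_mul_right _ _ (by positivity)]

lemma wordVal_lt_one (hB : 0 < B) {K : ℕ} (w : Fin K → Fin B) : wordVal w < 1 := by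
  rw [wordVal_eq_finFunctionFinEquiv hB, div_lt_one (by positivity)]
  exact_mod_cast (finFunctionFinEquiv (w ∘ Fin.rev)).isLt

lemma eq_of_wordVal_mem_Ioc (hB : 0 < B) {K : ℕ} {u v : ℝ} (huv : u - v < ((B : ℝ) ^ K)⁻¹)
    {w w' : Fin K → Fin B} (hw : wordVal w ∈ Ioc v u) (hw' : wordVal w' ∈ Ioc v u) : w = w' := by
  rw [wordVal_eq_finFunctionFinEquiv hB] at hw hw'
  have hBK : (0 : ℝ) < (B : ℝ) ^ K := by positivity
  set n := (finFunctionFinEquiv (w ∘ Fin.rev) : ℕ)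
  set n' := (finFunctionFinEquiv (w' ∘ Fin.rev) : ℕ)
  have hlt : ∀ {a b : ℕ}, (a : ℝ) / B ^ K ∈ Ioc v u → (b : ℝ) / B ^ K ∈ Ioc v u → a < b + 1 := by
    intro a b ha hb
    have : ((a : ℝ) - b) / B ^ K < 1 / B ^ K := by
      rw [sub_div, one_div]; linarith [ha.2, hb.1]
    exact_mod_cast sub_lt_iff_lt_add'.mp ((div_lt_div_iff_of_pos_right hBK).mp this)
  have hnn' : n = n' := by have := hlt hw hw'; have := hlt hw' hw; omega
  have hrev := finFunctionFinEquiv.injective (Fin.ext hnn')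
  funext k
  simpa using congrFun hrev k.rev

end Words

section WordNorms

variable {B d : ℕ} (A : Fin B → Matrix (Fin d) (Fin d) ℂ)

/-- The constant absorbs the finitely many words shorter than `T`; longer words are split into a
prefix of length `T` and a shorter suffix. -/
lemma exists_norm_wordProd_le_mul_pow {lam : ℝ} (hlam : 0 < lam) {T : ℕ} (hT : 1 ≤ T)
    (hjsr : ∀ w : Fin T → Fin B, ‖wordProd A w‖ ≤ lam ^ T) :
    ∃ M : ℝ, ∀ (K : ℕ) (w : Fin K → Fin B), ‖wordProd A w‖ ≤ M * lam ^ K := by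
  set M := ∑ k ∈ Finset.range T, ∑ u : Fin k → Fin B, ‖wordProd A u‖ / lam ^ k
  refine ⟨M, fun K => ?_⟩
  induction K using Nat.strong_induction_on with
  | _ K ih =>
    intro w
    rcases lt_or_ge K T with hKT | hKT
    · have hle : ‖wordProd A w‖ / lam ^ K ≤ M :=
        (Finset.single_le_sum (fun u _ => by positivity) (Finset.mem_univ w)).trans
          (Finset.single_le_sum (f := fun k => ∑ u : Fin k → Fin B, ‖wordProd A u‖ / lam ^ k)
            (fun k _ => by positivity) (Finset.mem_range.mpr hKT))
      rwa [div_le_iff₀ (by positivity)] at hle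
    · obtain ⟨m, rfl⟩ := Nat.exists_eq_add_of_le hKT
      rw [← Fin.append_castAdd_natAdd (f := w), wordProd_append, pow_add, mul_left_comm]
      exact (norm_mul_le _ _).trans
        (mul_le_mul (hjsr _) (ih m (by omega) _) (norm_nonneg _) (by positivity))

end WordNorms

section RunningSums

variable {B d : ℕ} (A : Fin B → Matrix (Fin d) (Fin d) ℂ) (C : Fin d → ℂ)

lemma runSum_of_neg {K : ℕ} {x : ℝ} (hx : x < 0) : runSum A C K x = 0 :=
  Finset.sum_eq_zero fun w _ => if_neg (by linarith [wordVal_nonneg w])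

lemma runSum_of_one_le (hB : 0 < B) {K : ℕ} {x : ℝ} (hx : 1 ≤ x) :
    runSum A C K x = (∑ r, A r) ^ K *ᵥ C := by
  rw [runSum, ← sum_wordProd, sum_mulVec]
  exact Finset.sum_congr rfl fun w _ => if_pos ((wordVal_lt_one hB w).le.trans hx)

lemma runSum_succ (hB : 0 < B) (K : ℕ) (x : ℝ) :
    runSum A C (K + 1) x = ∑ s, A s *ᵥ runSum A C K (B * x - s) := by
  rw [runSum, ← (Fin.consEquiv fun _ => Fin B).sum_comp, Fintype.sum_prod_type]
  refine Finset.sum_congr rfl fun s _ => ?_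
  rw [runSum, mulVec_sum]
  refine Finset.sum_congr rfl fun w _ => ?_
  have hcond : wordVal (Fin.cons s w) ≤ x ↔ wordVal w ≤ B * x - s := by
    rw [wordVal_cons, ← add_div, div_le_iff₀ (by positivity), le_sub_iff_add_le', mul_comm]
  change (if wordVal (Fin.cons s w) ≤ x then wordProd A (Fin.cons s w) *ᵥ C else 0) = _
  rw [if_congr hcond rfl rfl, wordProd_cons, ← mulVec_mulVec]
  split_ifs <;> simp

lemma norm_runSum_le (K : ℕ) (x : ℝ) :
    ‖runSum A C K x‖ ≤ ∑ w : Fin K → Fin B, ‖wordProd A w *ᵥ C‖ :=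
  (norm_sum_le _ _).trans <| Finset.sum_le_sum fun w _ => by split_ifs <;> simp

/-- At most one word value lies in an interval of length `< B^{-K}`, so the running sum jumps by at
most one term `A_w C` across it. -/
lemma norm_runSum_sub_le (hB : 0 < B) {K : ℕ} {u v : ℝ} (huv : |u - v| < ((B : ℝ) ^ K)⁻¹) {b : ℝ}
    (hb : ∀ w : Fin K → Fin B, ‖wordProd A w‖ ≤ b) :
    ‖runSum A C K u - runSum A C K v‖ ≤ b * ‖C‖ := by
  wlog hvu : v ≤ u generalizing u v
  · rw [norm_sub_rev]; exact this (by rwa [abs_sub_comm]) (le_of_not_ge hvu)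
  set S := Finset.univ.filter fun w : Fin K → Fin B => wordVal w ∈ Ioc v u
  have hS : S.card ≤ 1 := Finset.card_le_one.mpr fun w hw w' hw' =>
    eq_of_wordVal_mem_Ioc hB ((le_abs_self _).trans_lt huv) (Finset.mem_filter.mp hw).2
      (Finset.mem_filter.mp hw').2
  have hdiff : runSum A C K u - runSum A C K v = ∑ w ∈ S, wordProd A w *ᵥ C := by
    rw [runSum, runSum, ← Finset.sum_sub_distrib, Finset.sum_filter]
    refine Finset.sum_congr rfl fun w _ => ?_
    by_cases hv : wordVal w ≤ v
    · simp [hv, hvu.trans' hv, not_lt.mpr hv]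
    · by_cases hu : wordVal w ≤ u <;> simp [hu, hv, lt_of_not_ge hv]
  have hb0 : 0 ≤ b := (norm_nonneg _).trans (hb fun _ => ⟨0, hB⟩)
  calc ‖runSum A C K u - runSum A C K v‖ ≤ ∑ w ∈ S, ‖wordProd A w *ᵥ C‖ := by
        rw [hdiff]; exact norm_sum_le _ _
    _ ≤ S.card • (b * ‖C‖) := Finset.sum_le_card_nsmul _ _ _ fun w _ =>
        (linfty_opNorm_mulVec _ _).trans (by gcongr; exact hb w)
    _ ≤ b * ‖C‖ := by
        rw [nsmul_eq_mul]
        exact mul_le_of_le_one_left (by positivity) (by exact_mod_cast hS)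

end RunningSums

section Dilation

variable {B d : ℕ} (A : Fin B → Matrix (Fin d) (Fin d) ℂ)

/-- `DilationEq A ρ ω V Φ` is `Φ 0 = 0 ∧ Φ 1 = V ∧ DilationRel A (ρ * ω) V Φ Φ`; with `V = 0` this
is the homogeneous relation satisfied by differences of solutions. -/
def DilationRel (μ : ℂ) (V : Fin d → ℂ) (f g : ℝ → Fin d → ℂ) : Prop :=
  ∀ r : Fin B, ∀ x : ℝ, (r : ℝ) / B ≤ x → x < ((r : ℝ) + 1) / B →
    f x = μ⁻¹ • ((∑ s ∈ Finset.univ.filter fun s : Fin B => s < r, A s *ᵥ V) +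
      A r *ᵥ g (B * x - r))

variable {A} {μ : ℂ}

lemma DilationRel.sub {V : Fin d → ℂ} {f g f' g' : ℝ → Fin d → ℂ} (h : DilationRel A μ V f g)
    (h' : DilationRel A μ V f' g') : DilationRel A μ 0 (f - f') (g - g') := by
  intro r x h₁ h₂
  simp [h r x h₁ h₂, h' r x h₁ h₂, ← smul_sub, mulVec_sub]

lemma DilationRel.of_tendsto {V : Fin d → ℂ} {G : ℕ → ℝ → Fin d → ℂ} {F : ℝ → Fin d → ℂ}
    (hG : ∀ K, DilationRel A μ V (G (K + 1)) (G K))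
    (hGF : ∀ x, Tendsto (fun K => G K x) atTop (𝓝 (F x))) : DilationRel A μ V F F := by
  intro r x h₁ h₂
  refine tendsto_nhds_unique ((hGF x).comp (tendsto_add_atTop_nat 1)) ?_
  simp only [Function.comp_def, hG _ r x h₁ h₂]
  exact ((((continuous_const.matrix_mulVec continuous_id).tendsto _).comp
    (hGF _)).const_add _).const_smul _

lemma exists_digit (hB : 0 < B) {x : ℝ} (hx : x ∈ Ico 0 1) :
    ∃ r : Fin B, (r : ℝ) / B ≤ x ∧ x < ((r : ℝ) + 1) / B := by
  have hB' : (0 : ℝ) < B := by exact_mod_cast hB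
  have hfloor : ⌊B * x⌋₊ < B := by
    rw [Nat.floor_lt (by nlinarith [hx.1])]
    nlinarith [hx.2]
  refine ⟨⟨_, hfloor⟩, ?_, ?_⟩
  · rw [div_le_iff₀ hB', mul_comm x]; exact Nat.floor_le (by nlinarith [hx.1])
  · rw [lt_div_iff₀ hB', mul_comm x]; exact Nat.lt_floor_add_one _

lemma DilationRel.exists_eq_wordProd_mulVec (hB : 0 < B) {D : ℕ → ℝ → Fin d → ℂ}
    (hD : ∀ n, DilationRel A μ 0 (D (n + 1)) (D n)) (n : ℕ) {x : ℝ} (hx : x ∈ Ico 0 1) :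
    ∃ w : Fin n → Fin B, ∃ y ∈ Ico (0 : ℝ) 1, D n x = (μ ^ n)⁻¹ • wordProd A w *ᵥ D 0 y := by
  induction n generalizing x with
  | zero => exact ⟨Fin.elim0, x, hx, by simp [wordProd_zero]⟩
  | succ n ih =>
    obtain ⟨r, h₁, h₂⟩ := exists_digit hB hx
    have hB' : (0 : ℝ) < B := by exact_mod_cast hB
    have hy : B * x - r ∈ Ico (0 : ℝ) 1 := by
      constructor
      · rw [div_le_iff₀ hB'] at h₁; linarith
      · rw [lt_div_iff₀ hB'] at h₂; linarith
    obtain ⟨w, y, hy, hw⟩ := ih hy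
    refine ⟨Fin.cons r w, y, hy, ?_⟩
    rw [hD n r x h₁ h₂, hw, wordProd_cons, ← mulVec_mulVec]
    simp [mulVec_smul, smul_smul, pow_succ', mul_comm]

lemma DilationRel.norm_le (hB : 0 < B) {D : ℕ → ℝ → Fin d → ℂ}
    (hD : ∀ n, DilationRel A μ 0 (D (n + 1)) (D n)) {n : ℕ} {b c : ℝ}
    (hb : ∀ w : Fin n → Fin B, ‖wordProd A w‖ ≤ b) (hc : ∀ y ∈ Ico (0 : ℝ) 1, ‖D 0 y‖ ≤ c)
    {x : ℝ} (hx : x ∈ Ico 0 1) : ‖D n x‖ ≤ (‖μ‖ ^ n)⁻¹ * (b * c) := by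
  obtain ⟨w, y, hy, hw⟩ := DilationRel.exists_eq_wordProd_mulVec hB hD n hx
  rw [hw, norm_smul, norm_inv, norm_pow]
  gcongr
  exact (linfty_opNorm_mulVec _ _).trans
    (mul_le_mul (hb w) (hc y hy) (norm_nonneg _) ((norm_nonneg _).trans (hb w)))

end Dilation

section Uniqueness

variable {B d : ℕ} {A : Fin B → Matrix (Fin d) (Fin d) ℂ} {μ : ℂ}

/-- Unrolling `T` steps shrinks the maximum of `‖Δ‖` on `[0, 1]` by `(λ / ‖μ‖)^T < 1`. -/
lemma eqOn_zero_of_dilationRel_zero (hB : 0 < B) {Δ : ℝ → Fin d → ℂ}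
    (hΔc : ContinuousOn Δ (Icc 0 1)) (hΔ1 : Δ 1 = 0) (hΔ : DilationRel A μ 0 Δ Δ)
    {lam : ℝ} (hlam : 0 ≤ lam) (hlamμ : lam < ‖μ‖) {T : ℕ} (hT : 1 ≤ T)
    (hjsr : ∀ w : Fin T → Fin B, ‖wordProd A w‖ ≤ lam ^ T) : EqOn Δ 0 (Icc 0 1) := by
  obtain ⟨z, hz, hmax⟩ := isCompact_Icc.exists_isMaxOn (nonempty_Icc.2 zero_le_one) hΔc.norm
  have hq : (‖μ‖ ^ T)⁻¹ * lam ^ T < 1 := by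
    rw [inv_mul_lt_one₀ (pow_pos (hlam.trans_lt hlamμ) T)]
    exact pow_lt_pow_left₀ hlamμ hlam (by omega)
  have hz0 : ‖Δ z‖ = 0 := by
    rcases hz.2.lt_or_eq with hz1 | rfl
    · have hle := DilationRel.norm_le hB (D := fun _ => Δ) (fun _ => hΔ) hjsr
        (fun y hy => hmax (Ico_subset_Icc_self hy)) ⟨hz.1, hz1⟩
      rw [← mul_assoc] at hle
      nlinarith [norm_nonneg (Δ z)]
    · rw [hΔ1, norm_zero]
  intro x hx
  simpa [hz0] using hmax hx

lemma DilationEq.eqOn (hB : 0 < B) {ρ : ℝ} {ω : ℂ} {V : Fin d → ℂ} {Ψ Φ : ℝ → Fin d → ℂ}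
    (hΨ : DilationEq A ρ ω V Ψ) (hΦ : DilationEq A ρ ω V Φ) (hΨc : ContinuousOn Ψ (Icc 0 1))
    (hΦc : ContinuousOn Φ (Icc 0 1)) {lam : ℝ} (hlam : 0 ≤ lam) (hlamμ : lam < ‖(ρ : ℂ) * ω‖)
    {T : ℕ} (hT : 1 ≤ T) (hjsr : ∀ w : Fin T → Fin B, ‖wordProd A w‖ ≤ lam ^ T) :
    EqOn Ψ Φ (Icc 0 1) := fun x hx =>
  sub_eq_zero.mp <| eqOn_zero_of_dilationRel_zero hB (hΨc.sub hΦc)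
    (by simp [hΨ.2.1, hΦ.2.1]) (DilationRel.sub hΨ.2.2 hΦ.2.2) hlam hlamμ hT hjsr hx

end Uniqueness

section ScaledRunningSums

variable {B d : ℕ} (A : Fin B → Matrix (Fin d) (Fin d) ℂ) (C : Fin d → ℂ) (μ : ℂ)

def scaledRunSum (K : ℕ) (x : ℝ) : Fin d → ℂ :=
  (μ ^ K)⁻¹ • runSum A C K x

variable {A C μ}

lemma pow_mulVec_of_mulVec_eq_smul {M : Matrix (Fin d) (Fin d) ℂ} (hC : M *ᵥ C = μ • C) (K : ℕ) :
    M ^ K *ᵥ C = μ ^ K • C := by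
  induction K with
  | zero => simp
  | succ K ih => rw [pow_succ', ← mulVec_mulVec, ih, mulVec_smul, hC, smul_smul, pow_succ]

lemma scaledRunSum_of_neg {K : ℕ} {x : ℝ} (hx : x < 0) : scaledRunSum A C μ K x = 0 := by
  rw [scaledRunSum, runSum_of_neg A C hx, smul_zero]

variable (hB : 0 < B) (hμ : μ ≠ 0) (hC : (∑ r, A r) *ᵥ C = μ • C)
include hB hμ hC

lemma scaledRunSum_of_one_le {K : ℕ} {x : ℝ} (hx : 1 ≤ x) : scaledRunSum A C μ K x = C := by
  rw [scaledRunSum, runSum_of_one_le A C hB hx, pow_mulVec_of_mulVec_eq_smul hC,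
    inv_smul_smul₀ (pow_ne_zero _ hμ)]

lemma dilationRel_scaledRunSum (K : ℕ) :
    DilationRel A μ C (scaledRunSum A C μ (K + 1)) (scaledRunSum A C μ K) := by
  intro r x h₁ h₂
  have hB' : (0 : ℝ) < B := by exact_mod_cast hB
  rw [div_le_iff₀ hB'] at h₁
  rw [lt_div_iff₀ hB'] at h₂
  have hlt : ∀ s < r, scaledRunSum A C μ K (B * x - s) = C := fun s hs =>
    scaledRunSum_of_one_le hB hμ hC (by
      have : (s : ℝ) + 1 ≤ r := by exact_mod_cast hs
      linarith)
  have hgt : ∀ s, r < s → scaledRunSum A C μ K (B * x - s) = 0 := fun s hs =>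
    scaledRunSum_of_neg (by
      have : (r : ℝ) + 1 ≤ s := by exact_mod_cast hs
      linarith)
  have hsum : ∑ s, A s *ᵥ scaledRunSum A C μ K (B * x - s) =
      (∑ s ∈ Finset.univ.filter fun s : Fin B => s < r, A s *ᵥ C) +
        A r *ᵥ scaledRunSum A C μ K (B * x - r) := by
    rw [← Finset.sum_filter_add_sum_filter_not _ (· < r)]
    congr 1
    · exact Finset.sum_congr rfl fun s hs => by rw [hlt s (Finset.mem_filter.mp hs).2]
    · refine Finset.sum_eq_single_of_mem r (by simp) fun s hs hsr => ?_
      rw [hgt s (lt_of_le_of_ne (not_lt.mp (Finset.mem_filter.mp hs).2) (Ne.symm hsr)),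
        mulVec_zero]
  rw [← hsum, scaledRunSum, runSum_succ A C hB, pow_succ', mul_inv, ← smul_smul, Finset.smul_sum]
  simp only [scaledRunSum, mulVec_smul]

lemma norm_scaledRunSum_succ_sub_le {M lam : ℝ} (hlam : 0 ≤ lam)
    (hM : ∀ (K : ℕ) (w : Fin K → Fin B), ‖wordProd A w‖ ≤ M * lam ^ K) :
    ∃ c ≥ 0, ∀ (n : ℕ) (x : ℝ),
      ‖scaledRunSum A C μ (n + 1) x - scaledRunSum A C μ n x‖ ≤ c * (lam / ‖μ‖) ^ n := by
  set c₀ := ‖μ‖⁻¹ * ∑ w : Fin 1 → Fin B, ‖wordProd A w *ᵥ C‖ +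
    ∑ w : Fin 0 → Fin B, ‖wordProd A w *ᵥ C‖
  have hc₀ : ∀ y, ‖scaledRunSum A C μ 1 y - scaledRunSum A C μ 0 y‖ ≤ c₀ := fun y => by
    refine (norm_sub_le _ _).trans (add_le_add ?_ ?_) <;>
      simp only [scaledRunSum, norm_smul, norm_inv, pow_one, pow_zero, inv_one, norm_one,
        one_mul]
    · exact mul_le_mul_of_nonneg_left (norm_runSum_le A C 1 y) (by positivity)
    · exact norm_runSum_le A C 0 y
  have hM0 : 0 ≤ M := by simpa using (norm_nonneg _).trans (hM 0 Fin.elim0)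
  refine ⟨M * c₀, by positivity, fun n x => ?_⟩
  set D := fun n => scaledRunSum A C μ (n + 1) - scaledRunSum A C μ n
  by_cases hx : x ∈ Ico 0 1
  · have hD : ∀ n, DilationRel A μ 0 (D (n + 1)) (D n) := fun n =>
      (dilationRel_scaledRunSum hB hμ hC (n + 1)).sub (dilationRel_scaledRunSum hB hμ hC n)
    calc ‖D n x‖ ≤ (‖μ‖ ^ n)⁻¹ * (M * lam ^ n * c₀) :=
          DilationRel.norm_le hB hD (hM n) (fun y _ => hc₀ y) hx
      _ = M * c₀ * (lam / ‖μ‖) ^ n := by rw [div_pow]; field_simp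
  · rcases not_and_or.mp hx with hx | hx
    · rw [scaledRunSum_of_neg (not_le.mp hx), scaledRunSum_of_neg (not_le.mp hx), sub_self,
        norm_zero]
      positivity
    · rw [scaledRunSum_of_one_le hB hμ hC (not_lt.mp hx),
        scaledRunSum_of_one_le hB hμ hC (not_lt.mp hx), sub_self, norm_zero]
      positivity

end ScaledRunningSums

section Convergence

variable {B d : ℕ} {A : Fin B → Matrix (Fin d) (Fin d) ℂ} {C : Fin d → ℂ} {μ : ℂ}

lemma exists_norm_scaledRunSum_sub_le (hB : 0 < B) (hμ : μ ≠ 0) (hC : (∑ r, A r) *ᵥ C = μ • C)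
    {M lam : ℝ} (hM : ∀ (K : ℕ) (w : Fin K → Fin B), ‖wordProd A w‖ ≤ M * lam ^ K)
    (hlam : 0 ≤ lam) (hlamμ : lam < ‖μ‖) :
    ∃ F : ℝ → Fin d → ℂ, (∀ x, Tendsto (fun K => scaledRunSum A C μ K x) atTop (𝓝 (F x))) ∧
      ∃ c ≥ 0, ∀ K x, ‖scaledRunSum A C μ K x - F x‖ ≤ c * (lam / ‖μ‖) ^ K := by
  obtain ⟨c, hc, hstep⟩ := norm_scaledRunSum_succ_sub_le hB hμ hC hlam hM
  exact exists_norm_sub_le_geometric hc ((div_lt_one (hlam.trans_lt hlamμ)).2 hlamμ) hstep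

/-- The scaled running sums are step functions, but their jumps at level `K` are `O((λ/‖μ‖)^K)`,
which together with the uniform rate makes the limit uniformly continuous. -/
lemma uniformContinuous_of_norm_scaledRunSum_sub_le (hB : 0 < B) {M lam : ℝ}
    (hM : ∀ (K : ℕ) (w : Fin K → Fin B), ‖wordProd A w‖ ≤ M * lam ^ K) (hlam : 0 ≤ lam)
    (hlamμ : lam < ‖μ‖) {F : ℝ → Fin d → ℂ} {c : ℝ}
    (hF : ∀ K x, ‖scaledRunSum A C μ K x - F x‖ ≤ c * (lam / ‖μ‖) ^ K) : UniformContinuous F := by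
  have hμ : 0 < ‖μ‖ := hlam.trans_lt hlamμ
  have hq := tendsto_pow_atTop_nhds_zero_of_lt_one (div_nonneg hlam hμ.le)
    ((div_lt_one hμ).2 hlamμ)
  refine uniformContinuous_of_forall_approx fun ε hε => ?_
  have hsmall : ∀ a : ℝ, ∀ᶠ K in atTop, a * (lam / ‖μ‖) ^ K < ε := fun a =>
    (hq.const_mul a).eventually (gt_mem_nhds (by simpa using hε))
  obtain ⟨K, hK₁, hK₂⟩ := ((hsmall c).and (hsmall (M * ‖C‖))).exists
  refine ⟨scaledRunSum A C μ K, fun x => (dist_eq_norm _ _).trans_lt ((hF K x).trans_lt hK₁),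
    ((B : ℝ) ^ K)⁻¹, by positivity, fun u v huv => ?_⟩
  rw [dist_eq_norm, scaledRunSum, scaledRunSum, ← smul_sub, norm_smul, norm_inv, norm_pow]
  refine lt_of_le_of_lt ?_ hK₂
  calc (‖μ‖ ^ K)⁻¹ * ‖runSum A C K u - runSum A C K v‖ ≤ (‖μ‖ ^ K)⁻¹ * (M * lam ^ K * ‖C‖) := by
        gcongr
        exact norm_runSum_sub_le A C hB (by rwa [← Real.dist_eq]) (hM K)
    _ = M * ‖C‖ * (lam / ‖μ‖) ^ K := by rw [div_pow]; field_simp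

lemma dilationEq_of_tendsto_scaledRunSum (hB : 0 < B) {ρ : ℝ} {ω : ℂ} (hμ : (ρ : ℂ) * ω ≠ 0)
    (hC : (∑ r, A r) *ᵥ C = ((ρ : ℂ) * ω) • C) {F : ℝ → Fin d → ℂ}
    (hGF : ∀ x, Tendsto (fun K => scaledRunSum A C (ρ * ω) K x) atTop (𝓝 (F x)))
    (hFc : Continuous F) : DilationEq A ρ ω C F := by
  refine ⟨?_, ?_, DilationRel.of_tendsto (dilationRel_scaledRunSum hB hμ hC) hGF⟩
  · have hneg : Iio (0 : ℝ) ⊆ {x | F x = 0} := fun x hx =>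
      tendsto_nhds_unique (hGF x) (by simp [scaledRunSum_of_neg (mem_Iio.mp hx)])
    exact (isClosed_eq hFc continuous_const).closure_subset_iff.2 hneg (by simp)
  · exact tendsto_nhds_unique (hGF 1)
      (tendsto_const_nhds.congr fun K => (scaledRunSum_of_one_le hB hμ hC le_rfl).symm)

end Convergence

theorem runSum_eigenvector_speed_jsr_general (B d : ℕ) (hB : 2 ≤ B)
    (A : Fin B → Matrix (Fin d) (Fin d) ℂ) (C : Fin d → ℂ)
    (ρ : ℝ) (hρ : 0 < ρ) (ω : ℂ) (hω : ‖ω‖ = 1)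
    (hC : (∑ r, A r).mulVec C = ((ρ : ℂ) * ω) • C)
    -- hypothesis (jsr_λ)
    (lam : ℝ) (hlam : 0 < lam) (hlamρ : lam < ρ)
    (hjsr : ∃ T : ℕ, 1 ≤ T ∧ ∀ w : Fin T → Fin B, ‖wordProd A w‖ ≤ lam ^ T) :
    ∃ F : ℝ → Fin d → ℂ,
      ContinuousOn F (Set.Icc 0 1) ∧ DilationEq A ρ ω C F ∧
      (∀ Ψ : ℝ → Fin d → ℂ, ContinuousOn Ψ (Set.Icc 0 1) → DilationEq A ρ ω C Ψ →
        Set.EqOn Ψ F (Set.Icc 0 1)) ∧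
      (fun K : ℕ => ⨆ x : Set.Icc (0:ℝ) 1,
          ‖(((ρ : ℂ) * ω) ^ K)⁻¹ • runSum A C K x - F x‖) =O[atTop]
        fun K => (lam / ρ) ^ K := by
  obtain ⟨T, hT, hjsrT⟩ := hjsr
  have hB₀ : 0 < B := by omega
  have hμ : ‖(ρ : ℂ) * ω‖ = ρ := by simp [hω, abs_of_pos hρ]
  have hμ₀ : (ρ : ℂ) * ω ≠ 0 := by rw [← norm_ne_zero_iff, hμ]; exact hρ.ne'
  have hlamμ : lam < ‖(ρ : ℂ) * ω‖ := by rwa [hμ]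
  obtain ⟨M, hM⟩ := exists_norm_wordProd_le_mul_pow A hlam hT hjsrT
  obtain ⟨F, hGF, c, hc, hrate⟩ :=
    exists_norm_scaledRunSum_sub_le hB₀ hμ₀ hC hM hlam.le hlamμ
  have hFc : Continuous F :=
    (uniformContinuous_of_norm_scaledRunSum_sub_le hB₀ hM hlam.le hlamμ hrate).continuous
  have hFdil : DilationEq A ρ ω C F := dilationEq_of_tendsto_scaledRunSum hB₀ hμ₀ hC hGF hFc
  refine ⟨F, hFc.continuousOn, hFdil, fun Ψ hΨc hΨ =>
    hΨ.eqOn hB₀ hFdil hΨc hFc.continuousOn hlam.le hlamμ hT hjsrT, ?_⟩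
  rw [hμ] at hrate
  exact isBigO_iSup_norm_of_le hc (fun K => by positivity) fun K x => hrate K x

/-- if `C` is an eigenvector of `Q` for `ρω` and (jsr_λ) holds with `λ < ρ`,
the speed of convergence of `(ρω)^{-K} S_K` to the dilation solution is `O((λ/ρ)^K)`. -/
theorem runSum_eigenvector_speed_jsr (B d : ℕ) (hB : 2 ≤ B) (hd : 1 ≤ d)
    (A : Fin B → Matrix (Fin d) (Fin d) ℂ) (C : Fin d → ℂ)
    (ρ : ℝ) (hρ : 0 < ρ) (ω : ℂ) (hω : ‖ω‖ = 1)
    (hC : (∑ r, A r).mulVec C = ((ρ : ℂ) * ω) • C)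
    -- hypothesis (jsr_λ)
    (lam : ℝ) (hlam : 0 < lam) (hlamρ : lam < ρ)
    (hjsr : ∃ T : ℕ, 1 ≤ T ∧ ∀ w : Fin T → Fin B, ‖wordProd A w‖ ≤ lam ^ T) :
    ∃ F : ℝ → Fin d → ℂ,
      ContinuousOn F (Set.Icc 0 1) ∧ DilationEq A ρ ω C F ∧
      (∀ Ψ : ℝ → Fin d → ℂ, ContinuousOn Ψ (Set.Icc 0 1) → DilationEq A ρ ω C Ψ →
        Set.EqOn Ψ F (Set.Icc 0 1)) ∧
      (fun K : ℕ => ⨆ x : Set.Icc (0:ℝ) 1,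
          ‖(((ρ : ℂ) * ω) ^ K)⁻¹ • runSum A C K x - F x‖) =O[atTop]
        fun K => (lam / ρ) ^ K :=
  runSum_eigenvector_speed_jsr_general B d hB A C ρ hρ ω hω hC lam hlam hlamρ hjsr
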